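/- arXiv:1807.11026 — 3 statements merged into one kernel-verified Lean document; each statement's English description precedes it below -/
import Mathlib

section
/- For every rational tangle word (a_1, …, a_n), the connectivity state after all crossings of the word have been applied equals X if and only if the total number of NSI-labeled crossings of the word is odd. (Since a rational tangle has a closure that is a two-component link pseudodiagram exactly when its final connectivity state is H or V, this says such a closure exists if and only if the number of NSIs is even.) -/
/-!
Every self-intersection leaves the connectivity state unchanged and, since the state is then
`H` or `V`, it is not `X`. Every non-self-intersection exchanges `X` with another state. So each
crossing toggles the property "the state is `X`" exactly when it is an NSI, and since a word
starts in state `V`, the final state is `X` exactly when an odd number of NSIs occurred.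
-/

/-- The three connectivity states of a partially built rational tangle:
`H = {NW–NE, SW–SE}`, `V = {NW–SW, NE–SE}`, `X = {NW–SE, NE–SW}`. -/
inductive TState : Type
  | H
  | V
  | X
  deriving DecidableEq

/-- Effect of a bottom crossing (a twist of SW and SE) on the connectivity state. -/
def bstep : TState → TState
  | .H => .H
  | .V => .X
  | .X => .V

/-- Effect of a right crossing (a twist of NE and SE) on the connectivity state. -/
def rstep : TState → TState
  | .V => .V
  | .H => .X
  | .X => .H

/-- `step true` is a bottom crossing, `step false` is a right crossing. -/
def step : Bool → TState → TState
  | true => bstep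
  | false => rstep

/-- The twist direction of the (0-based) `i`-th syllable: bottom iff `i` is even
(1-based odd syllables are bottom twists). -/
def sylDir (i : ℕ) : Bool := decide (i % 2 = 0)

/-- The state in which a crossing of the (0-based) `i`-th syllable is a self-intersection:
`H` for bottom syllables, `V` for right syllables. -/
def siState (i : ℕ) : TState := if i % 2 = 0 then TState.H else TState.V

/-- Process a list of syllables starting from state `s`; the Boolean `b` records
whether the next syllable is a bottom syllable. Each syllable `a` applies
`|a|` crossings of the appropriate direction. -/
def runWord : List ℤ → Bool → TState → TState
  | [], _, s => s
  | a :: t, b, s => runWord t (!b) ((step b)^[a.natAbs] s)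

/-- The connectivity state at the start of the (0-based) `i`-th syllable of the word `w`
(a rational tangle word starts in state `V`). -/
def stateAt (w : List ℤ) (i : ℕ) : TState := runWord (w.take i) true TState.V

/-- The (0-based) `i`-th syllable of `w` is an SI syllable. -/
def IsSISyl (w : List ℤ) (i : ℕ) : Prop := stateAt w i = siState i

instance (w : List ℤ) (i : ℕ) : Decidable (IsSISyl w i) :=
  inferInstanceAs (Decidable (_ = _))

/-- The total number of NSI-labeled crossings of the word `w`: a crossing is counted
if it is applied in a state different from the SI state of its twist direction. -/
def nsiCrossCount (w : List ℤ) : ℕ :=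
  ∑ i ∈ Finset.range w.length,
    ((Finset.range (w.getD i 0).natAbs).filter
      (fun j => (step (sylDir i))^[j] (stateAt w i) ≠ siState i)).card

theorem iff_iff_even_sum_range {α : Type*} (x : ℕ → α) (Q : α → Prop) {c : ℕ → ℕ} {n : ℕ}
    (hx : ∀ i < n, (Q (x (i + 1)) ↔ (Q (x i) ↔ Even (c i)))) :
    Q (x n) ↔ (Q (x 0) ↔ Even (∑ i ∈ Finset.range n, c i)) := by
  induction n with
  | zero => simp
  | succ n ih =>
    rw [hx n n.lt_succ_self, ih fun i hi => hx i (hi.trans n.lt_succ_self),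
      Finset.sum_range_succ, Nat.even_add]
    tauto

def siStateOf (b : Bool) : TState := if b then TState.H else TState.V

theorem step_eq_X_iff (b : Bool) (s : TState) :
    step b s = TState.X ↔ (s = TState.X ↔ s = siStateOf b) := by
  cases b <;> cases s <;> decide

theorem iterate_step_eq_X_iff (b : Bool) (s : TState) (k : ℕ) :
    (step b)^[k] s = TState.X ↔ (s = TState.X ↔
      Even ((Finset.range k).filter
        (fun j => (step b)^[j] s ≠ siStateOf b)).card) := by
  rw [Finset.card_filter]
  refine iff_iff_even_sum_range (fun j => (step b)^[j] s) (· = TState.X) fun j _ => ?_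
  by_cases h : (step b)^[j] s = siStateOf b <;>
    simp [Function.iterate_succ_apply', step_eq_X_iff, h]

theorem runWord_concat (l : List ℤ) (a : ℤ) (b : Bool) (s : TState) :
    runWord (l ++ [a]) b s =
      (step (if Even l.length then b else !b))^[a.natAbs] (runWord l b s) := by
  induction l generalizing b s with
  | nil => rfl
  | cons a' l ih =>
    simp only [List.cons_append, runWord, ih, List.length_cons, Nat.even_add_one]
    split_ifs <;> simp

theorem stateAt_succ (w : List ℤ) {n : ℕ} (hn : n < w.length) :
    stateAt w (n + 1) = (step (sylDir n))^[(w.getD n 0).natAbs] (stateAt w n) := by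
  have hlen : (w.take n).length = n := List.length_take_of_le hn.le
  have hdir : (if Even n then true else !true) = sylDir n := by simp [sylDir, Nat.even_iff]
  rw [stateAt, List.take_add_one, List.getElem?_eq_getElem hn, Option.toList_some,
    runWord_concat, hlen, hdir, List.getD_eq_getElem w 0 hn, stateAt]

theorem siState_eq_siStateOf (i : ℕ) : siState i = siStateOf (sylDir i) := by
  simp [siState, siStateOf, sylDir]

theorem stateAt_succ_eq_X_iff (w : List ℤ) {n : ℕ} (hn : n < w.length) :
    stateAt w (n + 1) = TState.X ↔ (stateAt w n = TState.X ↔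
      Even ((Finset.range (w.getD n 0).natAbs).filter
        (fun j => (step (sylDir n))^[j] (stateAt w n) ≠ siState n)).card) := by
  rw [stateAt_succ w hn, siState_eq_siStateOf]
  exact iterate_step_eq_X_iff _ _ _

/-- the connectivity state after all crossings of a rational tangle word
have been applied equals `X` if and only if the total number of NSI-labeled crossings
of the word is odd. -/
theorem final_state_X_iff_odd_nsi (w : List ℤ) :
    stateAt w w.length = TState.X ↔ Odd (nsiCrossCount w) := by
  have hstart : stateAt w 0 ≠ TState.X := by simp [stateAt, runWord]
  rw [iff_iff_even_sum_range (stateAt w) (· = TState.X) fun _ hi => stateAt_succ_eq_X_iff w hi,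
    nsiCrossCount, ← Nat.not_even_iff_odd]
  tauto
end

section
/- For every rational tangle word (a_1, …, a_n): if the word has an even number of NSI crossings, then its last maximal run of NSI syllables consists of (a) a single even syllable, (b) two consecutive odd syllables, or (c) an odd syllable followed by a nonempty string of even syllables followed by a final odd syllable; if the word has an odd number of NSI crossings, then its last maximal run of NSI syllables consists of (a) a single odd syllable, or (b) an odd syllable followed by a nonempty string of even syllables. -/
/-- `IsNSIRun w l r` : the syllables with (0-based) indices in `[l, r)` form a maximal run
of NSI syllables of `w`. -/
def IsNSIRun (w : List ℤ) (l r : ℕ) : Prop :=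
  l < r ∧ r ≤ w.length ∧ (∀ j, l ≤ j → j < r → ¬ IsSISyl w j) ∧
    (l = 0 ∨ IsSISyl w (l - 1)) ∧ (r = w.length ∨ IsSISyl w r)

/-- The last maximal run of NSI syllables: a maximal run such that every later syllable
is an SI syllable. -/
def IsLastNSIRun (w : List ℤ) (l r : ℕ) : Prop :=
  IsNSIRun w l r ∧ ∀ j, r ≤ j → j < w.length → IsSISyl w j

/-- Run shape (a): a single even syllable. -/
def RunA (w : List ℤ) (l r : ℕ) : Prop := r = l + 1 ∧ Even (w.getD l 0)

/-- Run shape (b): two consecutive odd syllables. -/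
def RunB (w : List ℤ) (l r : ℕ) : Prop :=
  r = l + 2 ∧ Odd (w.getD l 0) ∧ Odd (w.getD (l + 1) 0)

/-- Run shape (c): an odd syllable, then a nonempty string of even syllables,
then a final odd syllable. -/
def RunC (w : List ℤ) (l r : ℕ) : Prop :=
  l + 3 ≤ r ∧ Odd (w.getD l 0) ∧ Odd (w.getD (r - 1) 0) ∧
    ∀ j, l < j → j < r - 1 → Even (w.getD j 0)

/-- Run shape (a'): a single odd syllable. -/
def RunA' (w : List ℤ) (l r : ℕ) : Prop := r = l + 1 ∧ Odd (w.getD l 0)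

/-- Run shape (b'): an odd syllable followed by a nonempty string of even syllables. -/
def RunB' (w : List ℤ) (l r : ℕ) : Prop :=
  l + 2 ≤ r ∧ Odd (w.getD l 0) ∧ ∀ j, l < j → j < r → Even (w.getD j 0)

/-- The number of NSI crossings of the word `w`: the sum of `|a_i|` over the NSI
syllables `a_i` of `w`. -/
def nsiCrossings (w : List ℤ) : ℕ :=
  ∑ i ∈ Finset.range w.length, if IsSISyl w i then 0 else (w.getD i 0).natAbs

/-- The number of SI crossings of the word `w`: the sum of `|a_i|` over the SI
syllables `a_i` of `w`. -/
def siCrossings (w : List ℤ) : ℕ :=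
  ∑ i ∈ Finset.range w.length, if IsSISyl w i then (w.getD i 0).natAbs else 0

section Aux

lemma step_step (b : Bool) (s : TState) : step b (step b s) = s := by
  cases b <;> cases s <;> rfl

lemma step_iterate (b : Bool) (k : ℕ) (s : TState) :
    (step b)^[k] s = if Even k then s else step b s := by
  induction k with
  | zero => simp
  | succ k ih =>
    rw [Function.iterate_succ_apply', ih]
    by_cases h : Even k <;> simp [h, Nat.even_add_one, step_step]

lemma runWord_append (l t : List ℤ) (b : Bool) (s : TState) :
    runWord (l ++ t) b s = runWord t ((!·)^[l.length] b) (runWord l b s) := by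
  induction l generalizing b s with
  | nil => rfl
  | cons a l ih =>
    simp only [List.cons_append, runWord, List.length_cons, Function.iterate_succ_apply]
    exact ih _ _

lemma not_iterate (k : ℕ) (b : Bool) : (!·)^[k] b = if Even k then b else !b := by
  induction k with
  | zero => simp
  | succ k ih =>
    rw [Function.iterate_succ_apply', ih]
    by_cases h : Even k <;> simp [h, Nat.even_add_one]

lemma stateAt_succ_s5 (w : List ℤ) (i : ℕ) :
    stateAt w (i + 1) =
      if Even (w.getD i 0) then stateAt w i else step (sylDir i) (stateAt w i) := by
  by_cases hi : i < w.length
  · have ht : w.take (i + 1) = w.take i ++ [w.getD i 0] := by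
      rw [List.take_succ, List.getElem?_eq_getElem hi, List.getD_eq_getElem w 0 hi]
      rfl
    have hb : (!·)^[(w.take i).length] true = sylDir i := by
      rw [List.length_take, Nat.min_eq_left hi.le, not_iterate, sylDir]
      by_cases h : Even i
      · simp [h, Nat.even_iff.mp h]
      · simp [h, Nat.odd_iff.mp (Nat.not_even_iff_odd.mp h)]
    show runWord (w.take (i + 1)) true TState.V = _
    rw [ht, runWord_append, hb]
    show (step (sylDir i))^[(w.getD i 0).natAbs] (stateAt w i) = _
    rw [step_iterate]
    by_cases he : Even (w.getD i 0)
    · rw [if_pos (Int.natAbs_even.mpr he), if_pos he]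
    · rw [if_neg (fun hc => he (Int.natAbs_even.mp hc)), if_neg he]
  · push_neg at hi
    have h1 : w.take (i + 1) = w.take i := by
      rw [List.take_of_length_le hi, List.take_of_length_le (by omega)]
    have h2 : w.getD i 0 = 0 := List.getD_eq_default w 0 hi
    show runWord (w.take (i + 1)) true TState.V = _
    rw [h1, h2, if_pos Even.zero]
    rfl

lemma siState_ne_X (i : ℕ) : siState i ≠ TState.X := by
  unfold siState; split <;> simp

lemma siState_succ_succ (i : ℕ) : siState (i + 2) = siState i := by
  unfold siState; rw [Nat.add_mod_right]

lemma siState_succ_ne (i : ℕ) : siState (i + 1) ≠ siState i := by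
  unfold siState
  rcases Nat.even_or_odd i with h | h
  · rw [Nat.even_iff] at h
    have h1 : (i + 1) % 2 = 1 := by omega
    simp [h, h1]
  · rw [Nat.odd_iff] at h
    have h1 : (i + 1) % 2 = 0 := by omega
    simp [h, h1]

lemma step_fix (i : ℕ) : step (sylDir i) (siState i) = siState i := by
  unfold sylDir siState
  by_cases h : i % 2 = 0 <;> simp [h] <;> rfl

lemma step_nsi (i : ℕ) (s : TState) (h : s ≠ siState i) :
    (s = TState.X → step (sylDir i) s = siState (i + 1)) ∧
    (s ≠ TState.X → s = siState (i + 1) ∧ step (sylDir i) s = TState.X) := by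
  unfold sylDir siState at *
  by_cases hp : i % 2 = 0
  · have h1 : ¬ ((i + 1) % 2 = 0) := by omega
    simp only [hp, h1, if_true, if_false, decide_eq_true_eq] at *
    cases s <;> simp_all [step, bstep]
  · have h1 : (i + 1) % 2 = 0 := by omega
    simp only [hp, h1, if_true, if_false, decide_eq_true_eq] at *
    cases s <;> simp_all [step, rstep]

lemma stateAt_succ_of_si {w : List ℤ} {i : ℕ} (h : IsSISyl w i) :
    stateAt w (i + 1) = stateAt w i := by
  rw [stateAt_succ_s5]
  split
  · rfl
  · rw [show stateAt w i = siState i from h, step_fix]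

def nsiUpTo (w : List ℤ) (i : ℕ) : ℕ :=
  ∑ j ∈ Finset.range i, if IsSISyl w j then 0 else (w.getD j 0).natAbs

lemma stateAt_eq_X_iff (w : List ℤ) (i : ℕ) :
    stateAt w i = TState.X ↔ Odd (nsiUpTo w i) := by
  induction i with
  | zero =>
    show runWord (w.take 0) true TState.V = TState.X ↔ _
    simp [runWord, nsiUpTo]
  | succ i ih =>
    have hsum : nsiUpTo w (i + 1) =
        nsiUpTo w i + (if IsSISyl w i then 0 else (w.getD i 0).natAbs) :=
      Finset.sum_range_succ _ i
    by_cases hsi : IsSISyl w i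
    · rw [stateAt_succ_of_si hsi, hsum, if_pos hsi, Nat.add_zero]
      exact ih
    · rw [stateAt_succ_s5, hsum, if_neg hsi]
      by_cases he : Even (w.getD i 0)
      · rw [if_pos he]
        have hev : Even ((w.getD i 0).natAbs) := Int.natAbs_even.mpr he
        have : Odd (nsiUpTo w i + (w.getD i 0).natAbs) ↔ Odd (nsiUpTo w i) := by
          rw [Nat.even_iff] at hev
          rw [Nat.odd_iff, Nat.odd_iff]
          omega
        rw [this]; exact ih
      · rw [if_neg he]
        have hodd : Odd ((w.getD i 0).natAbs) :=
          Int.natAbs_odd.mpr (Int.not_even_iff_odd.mp he)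
        have hpar : Odd (nsiUpTo w i + (w.getD i 0).natAbs) ↔ ¬ Odd (nsiUpTo w i) := by
          rw [Nat.odd_iff] at hodd ⊢
          rw [Nat.odd_iff]
          omega
        rw [hpar, ← ih]
        have hne : stateAt w i ≠ siState i := hsi
        obtain ⟨hx, hnx⟩ := step_nsi i (stateAt w i) hne
        by_cases hX : stateAt w i = TState.X
        · rw [hx hX]
          simp [hX, siState_ne_X (i + 1)]
        · rw [(hnx hX).2]
          simp [hX]

lemma stateAt_tail (w : List ℤ) (r : ℕ)
    (h : ∀ j, r ≤ j → j < w.length → IsSISyl w j) (hr : r ≤ w.length) :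
    stateAt w w.length = stateAt w r := by
  have H : ∀ k, r ≤ k → k ≤ w.length → stateAt w k = stateAt w r := by
    intro k hk
    induction k, hk using Nat.le_induction with
    | base => intro _; rfl
    | succ k hk ih =>
      intro hk1
      rw [stateAt_succ_of_si (h k hk (by omega)), ih (by omega)]
  exact H _ hr le_rfl

end Aux

/-- if a rational tangle word has an even number of NSI crossings, its last
maximal run of NSI syllables has shape (a), (b) or (c); if it has an odd number of NSI
crossings, its last maximal run has shape (a') (a single odd syllable) or (b') (an odd
syllable followed by a nonempty string of even syllables). -/
theorem last_run_shapes (w : List ℤ) (l r : ℕ) (h : IsLastNSIRun w l r) :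
    (Even (nsiCrossings w) → RunA w l r ∨ RunB w l r ∨ RunC w l r) ∧
    (Odd (nsiCrossings w) → RunA' w l r ∨ RunB' w l r) := by
  obtain ⟨⟨hlr, hrn, hnsi, hstart, _⟩, htail⟩ := h
  -- the state at the start of the run is the "plain" non-SI state
  have hPl : stateAt w l = siState (l + 1) := by
    rcases hstart with h0 | hsi
    · subst h0; rfl
    · rcases Nat.eq_zero_or_pos l with h0 | h0
      · exact absurd (show IsSISyl w l from h0 ▸ hsi) (hnsi l le_rfl hlr)
      · obtain ⟨m, rfl⟩ : ∃ m, l = m + 1 := ⟨l - 1, by omega⟩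
        have hsi' : IsSISyl w m := by simpa using hsi
        rw [stateAt_succ_of_si hsi', show stateAt w m = siState m from hsi',
          ← siState_succ_succ m]
  -- the parity of all NSI crossings is recorded by the state at `r`
  have hparX : stateAt w r = TState.X ↔ Odd (nsiCrossings w) := by
    have h1 : stateAt w w.length = stateAt w r := stateAt_tail w r htail hrn
    rw [← h1]
    exact stateAt_eq_X_iff w w.length
  -- all strictly interior positions of the run are in state X
  have hX : ∀ j, l < j → j < r → stateAt w j = TState.X := by
    intro j hj
    induction j, hj using Nat.le_induction with
    | base =>
      intro hr1
      rw [stateAt_succ_s5]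
      by_cases he : Even (w.getD l 0)
      · exfalso
        have hsi : IsSISyl w (l + 1) := by
          show stateAt w (l + 1) = siState (l + 1)
          rw [stateAt_succ_s5, if_pos he, hPl]
        exact hnsi (l + 1) (by omega) hr1 hsi
      · rw [if_neg he, hPl]
        exact ((step_nsi l (siState (l + 1)) (siState_succ_ne l)).2
          (siState_ne_X (l + 1))).2
    | succ j hj ih =>
      intro hr1
      have hXj : stateAt w j = TState.X := ih (by omega)
      have hne : stateAt w j ≠ siState j := by
        rw [hXj]; exact fun hc => siState_ne_X j hc.symm
      rw [stateAt_succ_s5]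
      by_cases he : Even (w.getD j 0)
      · rw [if_pos he]; exact hXj
      · exfalso
        have : stateAt w (j + 1) = siState (j + 1) := by
          rw [stateAt_succ_s5, if_neg he]
          exact (step_nsi j (stateAt w j) hne).1 hXj
        exact hnsi (j + 1) (by omega) hr1 this
  rcases Nat.eq_or_lt_of_le hlr with heq | hlt
  · -- the run is a single syllable
    by_cases he : Even (w.getD l 0)
    · have hsr : stateAt w r ≠ TState.X := by
        rw [← heq, stateAt_succ_s5, if_pos he, hPl]
        exact siState_ne_X (l + 1)
      constructor
      · intro _; exact Or.inl ⟨heq.symm, he⟩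
      · intro hodd; exact absurd (hparX.mpr hodd) hsr
    · have hsr : stateAt w r = TState.X := by
        rw [← heq, stateAt_succ_s5, if_neg he, hPl]
        exact ((step_nsi l (siState (l + 1)) (siState_succ_ne l)).2
          (siState_ne_X (l + 1))).2
      have hodd : Odd (nsiCrossings w) := hparX.mp hsr
      constructor
      · intro hev; rw [Nat.even_iff] at hev; rw [Nat.odd_iff] at hodd; omega
      · intro _; exact Or.inl ⟨heq.symm, Int.not_even_iff_odd.mp he⟩
  · -- the run has at least two syllables
    have hal : Odd (w.getD l 0) := by
      rw [← Int.not_even_iff_odd]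
      intro he
      have h1 : stateAt w (l + 1) = siState (l + 1) := by
        rw [stateAt_succ_s5, if_pos he, hPl]
      have h2 : stateAt w (l + 1) = TState.X := hX (l + 1) (by omega) hlt
      exact siState_ne_X (l + 1) (h1 ▸ h2.symm ▸ h2)
    have hmid : ∀ j, l < j → j < r - 1 → Even (w.getD j 0) := by
      intro j h1 h2
      by_contra he
      have e1 : stateAt w j = TState.X := hX j h1 (by omega)
      have e2 : stateAt w (j + 1) = TState.X := hX (j + 1) (by omega) (by omega)
      have hne : stateAt w j ≠ siState j := by
        rw [e1]; exact fun hc => siState_ne_X j hc.symm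
      have : stateAt w (j + 1) = siState (j + 1) := by
        rw [stateAt_succ_s5, if_neg he]
        exact (step_nsi j (stateAt w j) hne).1 e1
      exact siState_ne_X (j + 1) (this ▸ e2.symm ▸ e2)
    obtain ⟨m, rfl⟩ : ∃ m, r = m + 1 := ⟨r - 1, by omega⟩
    have hXm : stateAt w m = TState.X := hX m (by omega) (by omega)
    have hnem : stateAt w m ≠ siState m := by
      rw [hXm]; exact fun hc => siState_ne_X m hc.symm
    by_cases he : Even (w.getD m 0)
    · -- ends with an even syllable : shape (b')
      have hsr : stateAt w (m + 1) = TState.X := by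
        rw [stateAt_succ_s5, if_pos he]; exact hXm
      have hodd : Odd (nsiCrossings w) := hparX.mp hsr
      constructor
      · intro hev; rw [Nat.even_iff] at hev; rw [Nat.odd_iff] at hodd; omega
      · intro _
        refine Or.inr ⟨by omega, hal, ?_⟩
        intro j h1 h2
        rcases Nat.lt_or_ge j m with hj | hj
        · exact hmid j h1 (by omega)
        · have : j = m := by omega
          rw [this]; exact he
    · -- ends with an odd syllable : shape (b) or (c)
      have ham : Odd (w.getD m 0) := Int.not_even_iff_odd.mp he
      have hsr : stateAt w (m + 1) ≠ TState.X := by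
        rw [stateAt_succ_s5, if_neg he,
          (step_nsi m (stateAt w m) hnem).1 hXm]
        exact siState_ne_X (m + 1)
      constructor
      · intro _
        rcases Nat.eq_or_lt_of_le hlt with h2 | h3
        · -- r = l + 2 : shape (b)
          refine Or.inr (Or.inl ⟨h2.symm, hal, ?_⟩)
          have : l + 1 = m := by omega
          rw [this]; exact ham
        · -- r ≥ l + 3 : shape (c)
          refine Or.inr (Or.inr ⟨by omega, hal, by simpa using ham, ?_⟩)
          intro j hj1 hj2
          exact hmid j hj1 (by simpa using hj2)
      · intro hodd; exact absurd (hparX.mpr hodd) hsr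
end

section
/- Let n_1 and n_2 be odd natural numbers. In the resolution game on (n_1, n_2), the second player can force the resulting word (s_1, s_2) to lie in {(1, −1), (−1, 1)}. -/
section SignGame

variable {C : Type*} [Fintype C]

/-- A play of the sign-assignment game is a list of moves, each assigning a sign to a
crossing; it is legal if no crossing is chosen twice and every sign is `+1` or `-1`. -/
def LegalPlay (p : List (C × ℤ)) : Prop :=
  (p.map Prod.fst).Nodup ∧ ∀ m ∈ p, m.2 = 1 ∨ m.2 = -1

/-- The play `p` follows the strategy `σ` of the player who moves at all positions whose
number of prior moves is congruent to `parity` mod 2 (`parity = 0`: first player;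
`parity = 1`: second player). -/
def Follows (parity : ℕ) (σ : List (C × ℤ) → C × ℤ) (p : List (C × ℤ)) : Prop :=
  ∀ (i : ℕ) (hi : i < p.length), i % 2 = parity → p.get ⟨i, hi⟩ = σ (p.take i)

/-- The strategy `σ` always produces a legal move (an unchosen crossing with sign `±1`)
at the positions where its player is to move. -/
def LegalStrat (parity : ℕ) (σ : List (C × ℤ) → C × ℤ) : Prop :=
  ∀ p : List (C × ℤ), LegalPlay p → p.length % 2 = parity → p.length < Fintype.card C →
    (σ p).1 ∉ p.map Prod.fst ∧ ((σ p).2 = 1 ∨ (σ p).2 = -1)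

/-- The player moving at positions of parity `parity` can force the predicate `P` on
complete plays: they have a legal strategy such that every complete legal play following
it satisfies `P`. -/
def CanForce (parity : ℕ) (P : List (C × ℤ) → Prop) : Prop :=
  ∃ σ : List (C × ℤ) → C × ℤ, LegalStrat parity σ ∧
    ∀ p : List (C × ℤ), LegalPlay p → p.length = Fintype.card C → Follows parity σ p → P p

end SignGame

/-- The crossings of the resolution game on syllable sizes `n = (n_1, …, n_k)`:
pairs `(i, j)` with `i` a syllable index and `j < n_i`. -/
abbrev Cr (n : List ℕ) : Type := Σ i : Fin n.length, Fin (n.get i)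

/-- The resulting word `(s_1, …, s_k)` of a complete play of the resolution game:
`s_i` is the sum of the signs assigned to the crossings of the `i`-th syllable. -/
def result (n : List ℕ) (p : List (Cr n × ℤ)) : List ℤ :=
  (List.finRange n.length).map fun i =>
    ((p.filter fun m => decide (m.1.1 = i)).map Prod.snd).sum

/-
The second player uses a pairing strategy. Pair the first crossing of the first syllable with the
first crossing of the second, and inside the `i`-th syllable pair the crossing `j ≠ 0` with
`n_i - j` (that is, `-j` in `Fin n_i`); since `n_i` is odd, this is a fixed-point-free involution
of the crossings. Whenever the first player signs a crossing, the second player gives its partner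
the opposite sign. At the end all pairs inside a syllable cancel, so `s_i` is the sign of the
first crossing of syllable `i`, and these two signs are opposite.
-/

section Plays

variable {C : Type*}

theorem LegalPlay.of_append {p q : List (C × ℤ)} (h : LegalPlay (p ++ q)) : LegalPlay p :=
  ⟨(List.map_append .. ▸ h.1).of_append_left, fun m hm => h.2 m (List.mem_append_left q hm)⟩

theorem LegalPlay.toFinset_map_fst [Fintype C] [DecidableEq C] {p : List (C × ℤ)}
    (hp : LegalPlay p) (hlen : p.length = Fintype.card C) :
    (p.map Prod.fst).toFinset = Finset.univ :=
  Finset.eq_univ_of_card _ (by rw [List.toFinset_card_of_nodup hp.1, List.length_map, hlen])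

theorem LegalPlay.mem_of_length_eq_card [Fintype C] {p : List (C × ℤ)} (hp : LegalPlay p)
    (hlen : p.length = Fintype.card C) (c : C) : c ∈ p.map Prod.fst := by
  classical
  simpa [hp.toFinset_map_fst hlen] using List.mem_toFinset (l := p.map Prod.fst) (a := c)

theorem LegalPlay.exists_sign [Fintype C] {p : List (C × ℤ)} (hp : LegalPlay p)
    (hlen : p.length = Fintype.card C) : ∃ g : C → ℤ, ∀ c ε, (c, ε) ∈ p ↔ g c = ε := by
  have (c : C) : ∃ ε, (c, ε) ∈ p := by simpa using hp.mem_of_length_eq_card hlen c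
  choose g hg using this
  refine ⟨g, fun c ε => ⟨fun h => ?_, fun h => h ▸ hg c⟩⟩
  exact congrArg Prod.snd (List.inj_on_of_nodup_map hp.1 (hg c) h rfl)

theorem LegalPlay.sum_filter_eq_sum [Fintype C] [DecidableEq C] {p : List (C × ℤ)}
    (hp : LegalPlay p) (hlen : p.length = Fintype.card C) {g : C → ℤ}
    (hg : ∀ m ∈ p, m.2 = g m.1) (P : C → Bool) :
    ((p.filter fun m => P m.1).map Prod.snd).sum = ∑ c with P c, g c := by
  have hmap : (p.filter fun m => P m.1).map Prod.snd = ((p.map Prod.fst).filter P).map g := by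
    rw [List.map_congr_left fun m hm => hg m (List.mem_filter.1 hm).1, List.filter_map,
      List.map_map]
    rfl
  rw [hmap, ← List.sum_toFinset g (hp.1.filter P), List.toFinset_filter,
    hp.toFinset_map_fst hlen]

variable {parity : ℕ} {σ : List (C × ℤ) → C × ℤ}

theorem Follows.of_append {p q : List (C × ℤ)} (h : Follows parity σ (p ++ q)) :
    Follows parity σ p := fun i hi hpar => by
  simpa [List.getElem_append_left hi, List.take_append_of_le_length hi.le] using
    h i (by simp; omega) hpar

theorem Follows.eq_of_append_cons {p q : List (C × ℤ)} {m : C × ℤ}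
    (h : Follows parity σ (p ++ m :: q)) (hpar : p.length % 2 = parity) : m = σ p := by
  simpa using h p.length (by simp) hpar

theorem CanForce.mono [Fintype C] {P Q : List (C × ℤ) → Prop} (h : CanForce parity P)
    (hPQ : ∀ p, LegalPlay p → p.length = Fintype.card C → P p → Q p) : CanForce parity Q :=
  let ⟨σ, hσ, hP⟩ := h
  ⟨σ, hσ, fun p hp hlen hf => hPQ p hp hlen (hP p hp hlen hf)⟩

end Plays

section PairingStrategy

variable {C : Type*} {π : C → C}

def Paired (π : C → C) (p : List (C × ℤ)) : Prop :=
  ∀ m ∈ p, (π m.1, -m.2) ∈ p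

theorem Paired.append_pair (hπ : π.Involutive) {q : List (C × ℤ)} (hq : Paired π q)
    (m : C × ℤ) : Paired π (q ++ [m, (π m.1, -m.2)]) := by
  intro a ha
  simp only [List.mem_append, List.mem_cons, List.not_mem_nil, or_false] at ha ⊢
  rcases ha with ha | rfl | rfl
  · exact .inl (hq a ha)
  · exact .inr (.inr rfl)
  · simp [hπ m.1]

theorem Paired.partner_not_mem (hπ : π.Involutive) (hfree : ∀ c, π c ≠ c)
    {q : List (C × ℤ)} (hq : Paired π q) {m : C × ℤ}
    (hnd : ((q ++ [m]).map Prod.fst).Nodup) : π m.1 ∉ (q ++ [m]).map Prod.fst := by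
  simp only [List.map_append, List.map_cons, List.map_nil, List.nodup_append,
    List.mem_append, List.mem_singleton] at hnd ⊢
  rintro (hmem | heq)
  · obtain ⟨a, ha, hπa⟩ := List.mem_map.1 hmem
    have := hq a ha
    rw [hπa, hπ] at this
    exact hnd.2.2 _ (List.mem_map_of_mem (f := Prod.fst) this) _ rfl rfl
  · exact hfree _ heq

variable [Nonempty C]

noncomputable def freshCrossing (p : List (C × ℤ)) : C :=
  Classical.epsilon fun c => c ∉ p.map Prod.fst

open Classical in
/-- The fallback `(freshCrossing p, 1)` never occurs in a play following this strategy when `π` is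
a fixed-point-free involution. -/
noncomputable def pairingStrategy (π : C → C) (p : List (C × ℤ)) : C × ℤ :=
  match p.getLast? with
  | some m => if π m.1 ∉ p.map Prod.fst then (π m.1, -m.2) else (freshCrossing p, 1)
  | none => (freshCrossing p, 1)

theorem pairingStrategy_append_singleton {q : List (C × ℤ)} {m : C × ℤ}
    (h : π m.1 ∉ (q ++ [m]).map Prod.fst) : pairingStrategy π (q ++ [m]) = (π m.1, -m.2) := by
  simp only [pairingStrategy, List.getLast?_concat]
  exact if_pos h

theorem paired_of_follows_pairingStrategy (hπ : π.Involutive) (hfree : ∀ c, π c ≠ c) (k : ℕ) :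
    ∀ p : List (C × ℤ), LegalPlay p → Follows 1 (pairingStrategy π) p → p.length = 2 * k →
      Paired π p := by
  induction k with
  | zero => intro p _ _ hlen; simp_all [Paired]
  | succ k ih =>
    intro p hp hf hlen
    obtain ⟨q, a, b, rfl, hq⟩ : ∃ q a b, p = q ++ [a, b] ∧ q.length = 2 * k := by
      obtain ⟨a, b, hab⟩ := List.length_eq_two.1 (by simp [hlen, Nat.mul_succ] :
        (p.drop (2 * k)).length = 2)
      exact ⟨p.take (2 * k), a, b, by rw [← hab, List.take_append_drop], by simp [hlen]⟩
    have hsnoc : q ++ [a, b] = (q ++ [a]) ++ [b] := by simp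
    have hqa : Paired π q := ih q hp.of_append hf.of_append hq
    have hb : b = pairingStrategy π (q ++ [a]) :=
      (hsnoc ▸ hf).eq_of_append_cons (by simp [hq])
    rw [pairingStrategy_append_singleton
      (hqa.partner_not_mem hπ hfree (hsnoc ▸ hp).of_append.1)] at hb
    exact hb ▸ hqa.append_pair hπ a

variable [Fintype C]

theorem freshCrossing_not_mem {p : List (C × ℤ)} (hlt : p.length < Fintype.card C) :
    freshCrossing p ∉ p.map Prod.fst := by
  classical
  refine Classical.epsilon_spec (p := fun c => c ∉ p.map Prod.fst) ?_
  obtain ⟨c, -, hc⟩ := Finset.exists_mem_notMem_of_card_lt_card (s := (p.map Prod.fst).toFinset)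
    (t := Finset.univ)
    (by simpa using (List.toFinset_card_le (p.map Prod.fst)).trans_lt (by simpa using hlt))
  exact ⟨c, by simpa using hc⟩

theorem legalStrat_pairingStrategy : LegalStrat 1 (pairingStrategy π) := by
  intro p hp hpar hlt
  obtain ⟨q, m, rfl⟩ : ∃ q m, p = q ++ [m] := by
    rcases List.eq_nil_or_concat' p with rfl | h
    · simp at hpar
    · exact h
  by_cases h : π m.1 ∈ (q ++ [m]).map Prod.fst
  · simp only [pairingStrategy, List.getLast?_concat, h, not_true_eq_false, if_false]
    exact ⟨freshCrossing_not_mem hlt, by simp⟩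
  · rw [pairingStrategy_append_singleton h]
    refine ⟨h, ?_⟩
    rcases hp.2 m (by simp) with hm | hm <;> simp [hm]

theorem canForce_paired (hπ : π.Involutive) (hfree : ∀ c, π c ≠ c) :
    CanForce 1 (Paired π) := by
  refine ⟨pairingStrategy π, legalStrat_pairingStrategy, fun p hp hlen hf => ?_⟩
  obtain ⟨k, hk | hk⟩ := Nat.even_or_odd' p.length
  · exact paired_of_follows_pairingStrategy hπ hfree k p hp hf hk
  · -- a complete play of odd length would leave the partner of its last crossing unplayed
    obtain ⟨q, a, rfl⟩ : ∃ q a, p = q ++ [a] := by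
      rcases List.eq_nil_or_concat' p with rfl | h
      · simp at hk
      · exact h
    have hq := paired_of_follows_pairingStrategy hπ hfree k q hp.of_append hf.of_append
      (by simpa using hk)
    exact (hq.partner_not_mem hπ hfree hp.1 (hp.mem_of_length_eq_card hlen _)).elim

end PairingStrategy

theorem result_eq_map_sum {n : List ℕ} {p : List (Cr n × ℤ)} (hp : LegalPlay p)
    (hlen : p.length = Fintype.card (Cr n)) {g : Cr n → ℤ} (hg : ∀ m ∈ p, m.2 = g m.1) :
    result n p = (List.finRange n.length).map fun i => ∑ j, g ⟨i, j⟩ := by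
  refine List.map_congr_left fun i _ => ?_
  rw [hp.sum_filter_eq_sum hlen hg (fun c => decide (c.1 = i)), Finset.sum_filter,
    Fintype.sum_sigma]
  simp

theorem Fintype.sum_eq_apply_zero_of_apply_neg {G : Type*} [AddGroup G] [Fintype G]
    {f : G → ℤ} (hf : ∀ x ≠ 0, f (-x) = -f x) : ∑ x, f x = f 0 := by
  classical
  rw [← Finset.add_sum_erase _ _ (Finset.mem_univ 0), add_eq_left]
  refine Finset.sum_involution (fun x _ => -x) (fun x hx => ?_) (fun x hx _ hneg => ?_)
    (fun x hx => ?_) (fun x _ => neg_neg x)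
  · rw [hf x (Finset.ne_of_mem_erase hx), add_neg_cancel]
  · have := hf x (Finset.ne_of_mem_erase hx)
    rw [hneg] at this
    omega
  · simpa using Finset.ne_of_mem_erase hx

theorem Fin.neg_ne_self_of_odd {n : ℕ} [NeZero n] (hn : Odd n) {j : Fin n} (hj : j ≠ 0) :
    -j ≠ j := by
  intro h
  have := congrArg Fin.val h
  rw [Fin.val_neg, if_neg hj] at this
  obtain ⟨k, rfl⟩ := hn
  omega

section SyllablePairing

variable {ι : Type*} {n : ι → ℕ} [∀ i, NeZero (n i)] {τ : ι → ι}

def syllablePairing (τ : ι → ι) : (Σ i, Fin (n i)) → Σ i, Fin (n i)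
  | ⟨i, j⟩ => if j = 0 then ⟨τ i, 0⟩ else ⟨i, -j⟩

theorem syllablePairing_zero (i : ι) : syllablePairing (n := n) τ ⟨i, 0⟩ = ⟨τ i, 0⟩ := by
  rw [syllablePairing, if_pos rfl]

theorem syllablePairing_of_ne_zero {i : ι} {j : Fin (n i)} (hj : j ≠ 0) :
    syllablePairing τ ⟨i, j⟩ = ⟨i, -j⟩ := by
  rw [syllablePairing, if_neg hj]

theorem syllablePairing_involutive (hτ : τ.Involutive) :
    (syllablePairing (n := n) τ).Involutive := by
  rintro ⟨i, j⟩
  by_cases hj : j = 0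
  · rw [hj, syllablePairing_zero, syllablePairing_zero, hτ i]
  · rw [syllablePairing_of_ne_zero hj, syllablePairing_of_ne_zero (neg_ne_zero.2 hj), neg_neg]

theorem syllablePairing_ne_self (hτ : ∀ i, τ i ≠ i) (hn : ∀ i, Odd (n i))
    (c : Σ i, Fin (n i)) : syllablePairing τ c ≠ c := by
  obtain ⟨i, j⟩ := c
  by_cases hj : j = 0
  · rw [hj, syllablePairing_zero]
    exact fun h => hτ i (Sigma.mk.inj h).1
  · rw [syllablePairing_of_ne_zero hj]
    exact fun h => Fin.neg_ne_self_of_odd (hn i) hj (eq_of_heq (Sigma.mk.inj h).2)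

variable {g : (Σ i, Fin (n i)) → ℤ} (hg : ∀ c, g (syllablePairing τ c) = -g c)
include hg

theorem sum_syllable_eq_of_syllablePairing (i : ι) : ∑ j, g ⟨i, j⟩ = g ⟨i, 0⟩ :=
  Fintype.sum_eq_apply_zero_of_apply_neg fun j hj => by
    rw [← hg, syllablePairing_of_ne_zero hj]

theorem apply_syllablePairing_zero (i : ι) : g ⟨τ i, 0⟩ = -g ⟨i, 0⟩ := by
  rw [← hg, syllablePairing_zero]

end SyllablePairing

/-- in the resolution game on `(n_1, n_2)` with `n_1, n_2` odd, the second
player can force the resulting word to lie in `{(1, -1), (-1, 1)}`. -/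
theorem second_forces_opposite_ones (n₁ n₂ : ℕ) (h₁ : Odd n₁) (h₂ : Odd n₂) :
    CanForce (C := Cr [n₁, n₂]) 1 (fun p =>
      result [n₁, n₂] p = [1, -1] ∨ result [n₁, n₂] p = [-1, 1]) := by
  have hodd : ∀ i, Odd ([n₁, n₂].get i) := Fin.forall_fin_two.2 ⟨h₁, h₂⟩
  have (i : Fin 2) : NeZero ([n₁, n₂].get i) := ⟨(hodd i).pos.ne'⟩
  have : Nonempty (Cr [n₁, n₂]) := ⟨⟨0, 0⟩⟩
  have hrev : ∀ i : Fin [n₁, n₂].length, i.rev ≠ i := by simp [Fin.forall_fin_two]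
  refine (canForce_paired (syllablePairing_involutive Fin.rev_involutive)
    (syllablePairing_ne_self hrev hodd)).mono fun p hp hlen hpaired => ?_
  obtain ⟨g, hg⟩ := hp.exists_sign hlen
  have hflip (c) : g (syllablePairing Fin.rev c) = -g c := (hg _ _).1 (hpaired _ ((hg c _).2 rfl))
  have hword : result [n₁, n₂] p = [g ⟨0, 0⟩, -g ⟨0, 0⟩] := by
    rw [result_eq_map_sum hp hlen fun m hm => ((hg m.1 m.2).1 hm).symm]
    show [∑ j, g ⟨0, j⟩, ∑ j, g ⟨1, j⟩] = _
    rw [sum_syllable_eq_of_syllablePairing hflip, sum_syllable_eq_of_syllablePairing hflip,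
      ← apply_syllablePairing_zero hflip 0]
    rfl
  have hsign : g ⟨0, 0⟩ = 1 ∨ g ⟨0, 0⟩ = -1 := hp.2 _ ((hg ⟨0, 0⟩ _).2 rfl)
  rcases hsign with h | h <;> simp [hword, h]
end
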